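/- Let P'(z) = ∏_{j=1}^{n−1}(z−ζ_j) and P(z) = ∫_β^z P'(w) dw, with z_i a simple root of P. Then the second partial derivative of the implicit root z_i with respect to ζ_j satisfies ∂²z_i/∂ζ_j² = (2/(z_i−ζ_j)) ∂z_i/∂ζ_j − (P''(z_i)/P'(z_i)) (∂z_i/∂ζ_j)², provided z_i ≠ ζ_j. -/

import Mathlib

open Polynomial Filter Topology

/-!
Split `P'(w) = (w - ζ) Q(w)` as `P_ζ = A - ζ S` with `S' = Q`, `A' = X Q`, both vanishing
at `β`, so that the root satisfies `A(z(ζ)) - ζ S(z(ζ)) = 0` identically near `ζ₀`.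
One differentiation gives `(z - ζ) Q(z) z' = S(z)`, a second one at `ζ₀` gives
`((z' - 1) Q(z) + (z - ζ) Q'(z) z') z' + (z - ζ) Q(z) z'' = Q(z) z'`,
which is the claimed formula once solved for `z''`, since `P''(z) = Q(z) + (z - ζ) Q'(z)`.
-/

namespace Polynomial

theorem exists_derivative_eq {K : Type*} [Field K] [CharZero K] (q : K[X]) :
    ∃ S : K[X], derivative S = q := by
  induction q using Polynomial.induction_on' with
  | add p q hp hq =>
    obtain ⟨S, rfl⟩ := hp
    obtain ⟨T, rfl⟩ := hq
    exact ⟨S + T, derivative_add⟩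
  | monomial n a =>
    refine ⟨monomial (n + 1) (a / (n + 1)), ?_⟩
    rw [derivative_monomial, Nat.add_sub_cancel, Nat.cast_add_one,
      div_mul_cancel₀ _ (Nat.cast_add_one_ne_zero n)]

theorem exists_derivative_eq_and_eval_eq_zero {K : Type*} [Field K] [CharZero K]
    (q : K[X]) (β : K) : ∃ S : K[X], derivative S = q ∧ S.eval β = 0 := by
  obtain ⟨S, hS⟩ := exists_derivative_eq q
  exact ⟨S - C (S.eval β), by simp [hS], by simp⟩

theorem eq_of_derivative_eq_of_eval_eq {R : Type*} [Ring R] [IsAddTorsionFree R]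
    {p q : R[X]} {β : R} (hd : derivative p = derivative q) (hβ : p.eval β = q.eval β) :
    p = q := by
  have hC := eq_C_of_derivative_eq_zero (p := p - q) (by rw [derivative_sub, hd, sub_self])
  have hβ' : (p - q).eval β = 0 := by rw [eval_sub, hβ, sub_self]
  rw [hC, eval_C] at hβ'
  rw [← sub_eq_zero, hC, hβ', map_zero]

end Polynomial

section ImplicitRoot

variable {A S : ℂ[X]} {z : ℂ → ℂ} {ζ₀ : ℂ}

theorem eventually_sub_mul_eval_derivative_mul_deriv_eq (hA : derivative A = X * derivative S)
    (hz : ∀ᶠ s in 𝓝 ζ₀, DifferentiableAt ℂ z s)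
    (hroot : ∀ᶠ s in 𝓝 ζ₀, A.eval (z s) - s * S.eval (z s) = 0) :
    ∀ᶠ s in 𝓝 ζ₀, (z s - s) * (derivative S).eval (z s) * deriv z s = S.eval (z s) := by
  filter_upwards [hz, hroot.eventually_nhds] with s hzs hroots
  have hder : HasDerivAt (fun t => A.eval (z t) - t * S.eval (z t))
      ((derivative A).eval (z s) * deriv z s -
        (1 * S.eval (z s) + s * ((derivative S).eval (z s) * deriv z s))) s :=
    ((A.hasDerivAt (z s)).comp s hzs.hasDerivAt).sub
      ((hasDerivAt_id s).mul ((S.hasDerivAt (z s)).comp s hzs.hasDerivAt))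
  have h0 := (hder.congr_of_eventuallyEq (EventuallyEq.symm hroots)).unique (hasDerivAt_const s 0)
  rw [hA, eval_mul, eval_X] at h0
  linear_combination h0

theorem deriv_relation_of_eventually_sub_mul_eval_derivative_mul_deriv_eq
    (hz : DifferentiableAt ℂ z ζ₀) (hz' : DifferentiableAt ℂ (deriv z) ζ₀)
    (h : ∀ᶠ s in 𝓝 ζ₀, (z s - s) * (derivative S).eval (z s) * deriv z s = S.eval (z s)) :
    ((deriv z ζ₀ - 1) * (derivative S).eval (z ζ₀) +
          (z ζ₀ - ζ₀) * ((derivative (derivative S)).eval (z ζ₀) * deriv z ζ₀)) *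
        deriv z ζ₀ +
      (z ζ₀ - ζ₀) * (derivative S).eval (z ζ₀) * deriv (deriv z) ζ₀ =
      (derivative S).eval (z ζ₀) * deriv z ζ₀ := by
  have hlhs := ((hz.hasDerivAt.sub (hasDerivAt_id ζ₀)).mul
    (((derivative S).hasDerivAt (z ζ₀)).comp ζ₀ hz.hasDerivAt)).mul hz'.hasDerivAt
  have hrhs := (S.hasDerivAt (z ζ₀)).comp ζ₀ hz.hasDerivAt
  exact hlhs.unique (hrhs.congr_of_eventuallyEq h)

end ImplicitRoot

theorem stmt8_general (Q : Polynomial ℂ) (β ζ₀ zi : ℂ) (P : ℂ → Polynomial ℂ)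
    (hPd : ∀ s : ℂ, Polynomial.derivative (P s) = (Polynomial.X - Polynomial.C s) * Q)
    (hPβ : ∀ s : ℂ, (P s).eval β = 0)
    (z : ℂ → ℂ) (hz : AnalyticAt ℂ z ζ₀) (hz0 : z ζ₀ = zi)
    (hroot : ∀ᶠ s in nhds ζ₀, (P s).eval (z s) = 0)
    (hsimple : (zi - ζ₀) * Q.eval zi ≠ 0) :
    deriv (deriv z) ζ₀ =
      (2 / (zi - ζ₀)) * deriv z ζ₀ -
      ((Q + (Polynomial.X - Polynomial.C ζ₀) * Polynomial.derivative Q).eval zi /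
        ((zi - ζ₀) * Q.eval zi)) * (deriv z ζ₀) ^ 2 := by
  obtain ⟨S, hSQ, hSβ⟩ := exists_derivative_eq_and_eval_eq_zero Q β
  set A := P ζ₀ + C ζ₀ * S
  have hA : derivative A = X * derivative S := by
    simp only [A, derivative_add, hPd, derivative_C_mul, hSQ]
    ring
  have hP (s : ℂ) : P s = A - C s * S :=
    eq_of_derivative_eq_of_eval_eq (β := β)
      (by rw [hPd, derivative_sub, hA, derivative_C_mul, hSQ]; ring)
      (by simp [A, hPβ, hSβ])
  have hfirst := eventually_sub_mul_eval_derivative_mul_deriv_eq hA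
    (hz.eventually_analyticAt.mono fun _ h => h.differentiableAt)
    (hroot.mono fun s hs => by simpa [hP] using hs)
  have hsecond := deriv_relation_of_eventually_sub_mul_eval_derivative_mul_deriv_eq
    hz.differentiableAt hz.deriv.differentiableAt hfirst
  rw [hSQ, hz0] at hsecond
  have hzi : zi - ζ₀ ≠ 0 := left_ne_zero_of_mul hsimple
  have hQ : Q.eval zi ≠ 0 := right_ne_zero_of_mul hsimple
  simp only [eval_add, eval_mul, eval_sub, eval_X, eval_C]
  field_simp
  linear_combination hsecond

/-- With `P'(z) = (z - ζ_j) Q(z)` and `P s` the antiderivative of `(z-s)Q(z)`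
vanishing at `β`, let `z` be the analytic implicit root function near `ζ₀`
with `z ζ₀ = z_i` a simple root, `z_i ≠ ζ₀`. Then
`∂²z_i/∂ζ_j² = (2/(z_i-ζ₀)) ∂z_i/∂ζ_j - (P''(z_i)/P'(z_i)) (∂z_i/∂ζ_j)²`,
where `P'' = Q + (X - ζ₀) Q'`. -/
theorem stmt8 (Q : Polynomial ℂ) (β ζ₀ zi : ℂ) (P : ℂ → Polynomial ℂ)
    (hPd : ∀ s : ℂ, Polynomial.derivative (P s) = (Polynomial.X - Polynomial.C s) * Q)
    (hPβ : ∀ s : ℂ, (P s).eval β = 0)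
    (z : ℂ → ℂ) (hz : AnalyticAt ℂ z ζ₀) (hz0 : z ζ₀ = zi)
    (hroot : ∀ᶠ s in nhds ζ₀, (P s).eval (z s) = 0)
    (hsimple : (zi - ζ₀) * Q.eval zi ≠ 0)
    (hne : zi ≠ ζ₀) :
    deriv (deriv z) ζ₀ =
      (2 / (zi - ζ₀)) * deriv z ζ₀ -
      ((Q + (Polynomial.X - Polynomial.C ζ₀) * Polynomial.derivative Q).eval zi /
        ((zi - ζ₀) * Q.eval zi)) * (deriv z ζ₀) ^ 2 :=
  stmt8_general Q β ζ₀ zi P hPd hPβ z hz hz0 hroot hsimple
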